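/- arXiv:2212.02546 — 5 statements merged into one kernel-verified Lean document; each statement's English description precedes it below -/
import Mathlib

section
/- For two symmetric pairings τ of degree p and τ' of degree p' on a cochain complex V, the associated Laplacians on Sym V graded-commute: Δ_τ ∘ Δ_{τ'} = (−1)^{p p'} Δ_{τ'} ∘ Δ_τ. -/
/-!
STATEMENT 3: For two symmetric pairings `τ` of degree `p` and `τ'` of degree `p'`
on a cochain complex `V`, the associated Laplacians on `Sym V` graded-commute:
`Δ_τ ∘ Δ_{τ'} = (−1)^{p p'} Δ_{τ'} ∘ Δ_τ`.

We model `Sym V` as an abstract ℤ-graded-commutative algebra `A` (with Koszul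
sign rule) generated by a graded subspace of generators (the image of `V`), and
characterize the Laplacian `Δ_τ` by the defining properties of
Definition 2.5 of the paper: it has degree `p`, vanishes on the unit and on
generators, takes the value `τ(v⊗w)·1` on products of two generators, and its
deviation from being a (signed) derivation is a graded bi-derivation.
-/

/-- Koszul sign `(−1)ⁿ`. -/
def gsgn (K : Type*) [Field K] (n : ℤ) : K := if Even n then 1 else -1

/-- A model of the graded symmetric algebra `Sym V` of a graded vector space `V`:
a ℤ-graded, graded-commutative algebra generated by a graded space of
generators. -/
structure GSA (K : Type*) [Field K] (A : Type*) [AddCommGroup A] [Module K A] where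
  grade : ℤ → Submodule K A
  one : A
  mul : A →ₗ[K] A →ₗ[K] A
  one_mem : one ∈ grade 0
  mul_mem : ∀ {i j : ℤ} {a b : A}, a ∈ grade i → b ∈ grade j → mul a b ∈ grade (i + j)
  one_mul : ∀ a, mul one a = a
  mul_one : ∀ a, mul a one = a
  mul_assoc : ∀ a b c, mul (mul a b) c = mul a (mul b c)
  mul_comm : ∀ {i j : ℤ} {a b : A}, a ∈ grade i → b ∈ grade j →
    mul a b = gsgn K (i * j) • mul b a
  /-- the generators (the image of `V` in `Sym V`) -/
  gen : ℤ → Submodule K A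
  gen_le : ∀ i, gen i ≤ grade i

namespace GSA

variable {K : Type*} [Field K] {A : Type*} [AddCommGroup A] [Module K A]

/-- monomials in the generators -/
inductive IsMon (S : GSA K A) : A → Prop
  | one : IsMon S S.one
  | gen {i : ℤ} {v : A} : v ∈ S.gen i → IsMon S v
  | mul {a b : A} : IsMon S a → IsMon S b → IsMon S (S.mul a b)

/-- `A` is spanned by monomials in the generators (as is the case for `Sym V`). -/
def Generates (S : GSA K A) : Prop :=
  ∀ a : A, a ∈ Submodule.span K {x | S.IsMon x}

/-- a symmetric pairing `τ ∈ [V ⊗ V, K]^p` of degree `p`, extended by zero to `A` -/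
structure IsSymPairing (S : GSA K A) (p : ℤ) (τ : A →ₗ[K] A →ₗ[K] K) : Prop where
  symm : ∀ {i j : ℤ} {a b : A}, a ∈ S.grade i → b ∈ S.grade j →
    τ a b = gsgn K (i * j) * τ b a
  deg : ∀ {i j : ℤ} {a b : A}, a ∈ S.grade i → b ∈ S.grade j →
    i + j + p ≠ 0 → τ a b = 0

/-- the bracket `μ⟨a,b⟩_τ` measuring the failure of `D = Δ_τ` (of degree `p`)
to be a signed derivation; `i` is the degree of `a`. -/
def br (S : GSA K A) (D : A →ₗ[K] A) (p i : ℤ) (a b : A) : A :=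
  D (S.mul a b) - S.mul (D a) b - gsgn K (p * i) • S.mul a (D b)

/-- the defining properties of the Laplacian `Δ_τ` of a symmetric degree-`p`
pairing `τ` (Definition 2.5 of the paper, with the bi-derivation property of
`⟨−,−⟩_τ` of Definition 2.3 expressed through the bracket `br`). -/
structure IsLaplacian (S : GSA K A) (p : ℤ) (τ : A →ₗ[K] A →ₗ[K] K)
    (D : A →ₗ[K] A) : Prop where
  deg : ∀ {i : ℤ} {a : A}, a ∈ S.grade i → D a ∈ S.grade (i + p)
  map_one : D S.one = 0
  map_gen : ∀ {i : ℤ} {v : A}, v ∈ S.gen i → D v = 0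
  map_pair : ∀ {i j : ℤ} {v w : A}, v ∈ S.gen i → w ∈ S.gen j →
    D (S.mul v w) = τ v w • S.one
  br_der : ∀ {i j k : ℤ} {a b c : A}, a ∈ S.grade i → b ∈ S.grade j → c ∈ S.grade k →
    S.br D p i a (S.mul b c) =
      S.mul (S.br D p i a b) c + gsgn K ((i + p) * j) • S.mul b (S.br D p i a c)

end GSA


section Infra
variable {K : Type*} [Field K]

lemma gsgn_even {n : ℤ} (h : Even n) : gsgn K n = 1 := if_pos h
lemma gsgn_congr {m n : ℤ} (h : Even (m - n)) : gsgn K m = gsgn K n := by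
  unfold gsgn
  rw [Int.even_sub] at h
  by_cases hm : Even m
  · rw [if_pos hm, if_pos (h.mp hm)]
  · rw [if_neg hm, if_neg (fun hn => hm (h.mpr hn))]

lemma gsgn_mul_gsgn (m n : ℤ) : gsgn K m * gsgn K n = gsgn K (m + n) := by
  unfold gsgn
  by_cases hm : Even m <;> by_cases hn : Even n <;>
    simp [hm, hn, Int.even_add, iff_iff_implies_and_implies] <;> tauto

variable {A : Type*} [AddCommGroup A] [Module K A]

lemma gsgn_smul_smul (m n : ℤ) (x : A) : gsgn K m • gsgn K n • x = gsgn K (m + n) • x := by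
  rw [smul_smul, gsgn_mul_gsgn]
end Infra

namespace GSA

variable {K : Type*} [Field K] {A : Type*} [AddCommGroup A] [Module K A] (S : GSA K A)

lemma IsMon.homog {m : A} (hm : S.IsMon m) : ∃ k, m ∈ S.grade k := by
  induction hm with
  | one => exact ⟨0, S.one_mem⟩
  | @gen i v hv => exact ⟨i, S.gen_le i hv⟩
  | @mul a b _ _ iha ihb =>
      obtain ⟨i, hi⟩ := iha; obtain ⟨j, hj⟩ := ihb
      exact ⟨i + j, S.mul_mem hi hj⟩

/-- kernel lemma: a linear map vanishing on monomials vanishes. -/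
lemma eq_zero_of_isMon (hgen : S.Generates) (T : A →ₗ[K] A)
    (h : ∀ m, S.IsMon m → T m = 0) : ∀ a, T a = 0 := by
  intro a
  have hle : Submodule.span K {x | S.IsMon x} ≤ LinearMap.ker T :=
    Submodule.span_le.mpr fun m hm => h m hm
  exact hle (hgen a)

/-- the bracket as a linear map in the second argument -/
def Lop (D : A →ₗ[K] A) (p i : ℤ) (v : A) : A →ₗ[K] A :=
  D ∘ₗ S.mul v - S.mul (D v) - gsgn K (p * i) • (S.mul v ∘ₗ D)

lemma Lop_apply (D : A →ₗ[K] A) (p i : ℤ) (v b : A) :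
    S.Lop D p i v b = S.br D p i v b := rfl

/-- the vanishing principle -/
lemma vanish (hgen : S.Generates) (T : A →ₗ[K] A) (s : ℤ → K)
    (h1 : T S.one = 0)
    (hstep : ∀ (i : ℤ) (v : A), v ∈ S.gen i → ∀ b : A,
      T (S.mul v b) = s i • S.mul v (T b)) :
    ∀ a, T a = 0 := by
  refine S.eq_zero_of_isMon hgen T ?_
  have key : ∀ m, S.IsMon m → T m = 0 ∧ ∀ b, T b = 0 → T (S.mul m b) = 0 := by
    intro m hm
    induction hm with
    | one => exact ⟨h1, fun b hb => by rw [S.one_mul]; exact hb⟩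
    | @gen i v hv =>
        have h2 : ∀ b, T b = 0 → T (S.mul v b) = 0 := fun b hb => by
          rw [hstep i v hv b, hb, map_zero, smul_zero]
        refine ⟨?_, h2⟩
        have := h2 S.one h1
        rwa [S.mul_one] at this
    | @mul a b _ _ iha ihb =>
        exact ⟨iha.2 b ihb.1, fun c hc => by
          rw [S.mul_assoc]; exact iha.2 _ (ihb.2 c hc)⟩
  exact fun m hm => (key m hm).1

end GSA


namespace GSA
section Main
variable {K : Type*} [Field K] {A : Type*} [AddCommGroup A] [Module K A]
variable {S : GSA K A}

lemma mul_smul_one (c : K) (x : A) : S.mul (c • S.one) x = c • x := by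
  rw [map_smul, LinearMap.smul_apply, S.one_mul]

variable {p : ℤ} {τ : A →ₗ[K] A →ₗ[K] K} {D : A →ₗ[K] A}

/-- extension of the bi-derivation property to arbitrary third argument -/
lemma br_der_ext (hgen : S.Generates) (hD : S.IsLaplacian p τ D)
    {i j : ℤ} {a b : A} (ha : a ∈ S.grade i) (hb : b ∈ S.grade j) (c : A) :
    S.br D p i a (S.mul b c) =
      S.mul (S.br D p i a b) c + gsgn K ((i + p) * j) • S.mul b (S.br D p i a c) := by
  have key := S.eq_zero_of_isMon hgen
    (S.Lop D p i a ∘ₗ S.mul b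
      - (S.mul (S.br D p i a b) + gsgn K ((i + p) * j) • (S.mul b ∘ₗ S.Lop D p i a)))
    (fun m hm => by
      obtain ⟨k, hk⟩ := hm.homog
      simp only [LinearMap.sub_apply, LinearMap.add_apply, LinearMap.coe_comp,
        Function.comp_apply, LinearMap.smul_apply, Lop_apply]
      rw [hD.br_der ha hb hk]; abel) c
  simp only [LinearMap.sub_apply, LinearMap.add_apply, LinearMap.coe_comp,
    Function.comp_apply, LinearMap.smul_apply, Lop_apply, sub_eq_zero] at key
  exact key

lemma br_one' (hD : S.IsLaplacian p τ D) {i : ℤ} {v : A} (hv : v ∈ S.gen i) :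
    S.br D p i v S.one = 0 := by
  simp [br, S.mul_one, hD.map_gen hv, hD.map_one]

lemma br_gen' (hD : S.IsLaplacian p τ D) {i j : ℤ} {v w : A}
    (hv : v ∈ S.gen i) (hw : w ∈ S.gen j) :
    S.br D p i v w = τ v w • S.one := by
  simp [br, hD.map_gen hv, hD.map_gen hw, hD.map_pair hv hw]

/-- expansion of `D` on a product with a generator on the left -/
lemma D_mul_gen (hD : S.IsLaplacian p τ D) {i : ℤ} {v : A} (hv : v ∈ S.gen i) (b : A) :
    D (S.mul v b) = gsgn K (p * i) • S.mul v (D b) + S.br D p i v b := by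
  simp only [br, hD.map_gen hv, map_zero, LinearMap.zero_apply]
  abel

/-- expansion of the bracket of a generator on a product with a generator -/
lemma br_gen_mul (hgen : S.Generates) (hD : S.IsLaplacian p τ D) {i g : ℤ} {v u : A}
    (hv : v ∈ S.gen i) (hu : u ∈ S.gen g) (b : A) :
    S.br D p i v (S.mul u b) =
      τ v u • b + gsgn K ((i + p) * g) • S.mul u (S.br D p i v b) := by
  rw [br_der_ext hgen hD (S.gen_le i hv) (S.gen_le g hu) b, br_gen' hD hv hu,
    mul_smul_one]


lemma br_add {i : ℤ} {a : A} (x y : A) :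
    S.br D p i a (x + y) = S.br D p i a x + S.br D p i a y :=
  map_add (S.Lop D p i a) x y

lemma br_smul {i : ℤ} {a : A} (c : K) (x : A) :
    S.br D p i a (c • x) = c • S.br D p i a x :=
  map_smul (S.Lop D p i a) c x

/-- the contraction operators associated to generators graded-commute -/
lemma Lcomm (hgen : S.Generates)
    {p' : ℤ} {τ' : A →ₗ[K] A →ₗ[K] K} {D' : A →ₗ[K] A}
    (hτ : S.IsSymPairing p τ) (hτ' : S.IsSymPairing p' τ')
    (hD : S.IsLaplacian p τ D) (hD' : S.IsLaplacian p' τ' D')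
    {i j : ℤ} {v w : A} (hv : v ∈ S.gen i) (hw : w ∈ S.gen j) (b : A) :
    S.br D p j w (S.br D' p' i v b)
      = gsgn K ((j + p) * (i + p')) • S.br D' p' i v (S.br D p j w b) := by
  have key : ∀ x, (S.Lop D p j w ∘ₗ S.Lop D' p' i v
      - gsgn K ((j + p) * (i + p')) • (S.Lop D' p' i v ∘ₗ S.Lop D p j w)) x = 0 := by
    refine S.vanish hgen _ (fun g => gsgn K (((i + p') + (j + p)) * g)) ?_ ?_
    · have h1 : S.Lop D' p' i v S.one = 0 := br_one' hD' hv
      have h2 : S.Lop D p j w S.one = 0 := br_one' hD hw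
      simp only [LinearMap.sub_apply, LinearMap.coe_comp, Function.comp_apply,
        LinearMap.smul_apply, h1, h2, map_zero, smul_zero, sub_zero]
    · intro g u hu b
      simp only [LinearMap.sub_apply, LinearMap.coe_comp, Function.comp_apply,
        LinearMap.smul_apply, Lop_apply]
      rw [br_gen_mul hgen hD' hv hu b, br_gen_mul hgen hD hw hu b]
      simp only [br_add, br_smul]
      rw [br_gen_mul hgen hD hw hu, br_gen_mul hgen hD' hv hu]
      generalize hA : i + p' = a
      generalize hB : j + p = b2
      by_cases hc1 : i + g + p' = 0 <;> by_cases hc2 : j + g + p = 0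
      · have hga : g = -a := by omega
        have hba : b2 = a := by omega
        rw [hba]
        subst hga
        by_cases ha : Even a <;>
          simp [gsgn, Int.even_mul, Int.even_add, even_neg, ha, smul_sub,
            smul_smul, map_sub, map_smul] <;> module
      · have hz : τ w u = 0 := hτ.deg (S.gen_le j hw) (S.gen_le g hu) (by omega)
        have hga : g = -a := by omega
        subst hga
        by_cases ha : Even a <;> by_cases hb : Even b2 <;>
          simp [hz, gsgn, Int.even_mul, Int.even_add, even_neg, ha, hb, smul_sub,
            smul_smul, map_sub, map_smul] <;> module
      · have hz : τ' v u = 0 := hτ'.deg (S.gen_le i hv) (S.gen_le g hu) (by omega)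
        have hgb : g = -b2 := by omega
        subst hgb
        by_cases ha : Even a <;> by_cases hb : Even b2 <;>
          simp [hz, gsgn, Int.even_mul, Int.even_add, even_neg, ha, hb, smul_sub,
            smul_smul, map_sub, map_smul] <;> module
      · have hz : τ w u = 0 := hτ.deg (S.gen_le j hw) (S.gen_le g hu) (by omega)
        have hz' : τ' v u = 0 := hτ'.deg (S.gen_le i hv) (S.gen_le g hu) (by omega)
        by_cases ha : Even a <;> by_cases hb : Even b2 <;> by_cases hg : Even g <;>
          simp [hz, hz', gsgn, Int.even_mul, Int.even_add, even_neg, ha, hb, hg,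
            smul_sub, smul_smul, map_sub, map_smul] <;> module
  have := key b
  simp only [LinearMap.sub_apply, LinearMap.coe_comp, Function.comp_apply,
    LinearMap.smul_apply, Lop_apply, sub_eq_zero] at this
  exact this


lemma br_zero {i : ℤ} {a : A} : S.br D p i a (0 : A) = 0 :=
  map_zero (S.Lop D p i a)

set_option maxHeartbeats 2000000 in
/-- the graded commutator `[D, L'_v] = (−1)^{p p'} [D', L_v]` -/
lemma Ccomm (hgen : S.Generates)
    {p' : ℤ} {τ' : A →ₗ[K] A →ₗ[K] K} {D' : A →ₗ[K] A}
    (hτ : S.IsSymPairing p τ) (hτ' : S.IsSymPairing p' τ')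
    (hD : S.IsLaplacian p τ D) (hD' : S.IsLaplacian p' τ' D')
    {i : ℤ} {v : A} (hv : v ∈ S.gen i) (b : A) :
    D (S.br D' p' i v b) =
      gsgn K (p * (i + p')) • S.br D' p' i v (D b)
      + gsgn K (p * p') • D' (S.br D p i v b)
      - gsgn K (p * p' + p' * (i + p)) • S.br D p i v (D' b) := by
  have key : ∀ x, (D ∘ₗ S.Lop D' p' i v - gsgn K (p * (i + p')) • (S.Lop D' p' i v ∘ₗ D)
      - gsgn K (p * p') • (D' ∘ₗ S.Lop D p i v)
      + gsgn K (p * p' + p' * (i + p)) • (S.Lop D p i v ∘ₗ D')) x = 0 := by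
    refine S.vanish hgen _ (fun g => gsgn K ((i + p + p') * g)) ?_ ?_
    · simp only [LinearMap.sub_apply, LinearMap.add_apply, LinearMap.coe_comp,
        Function.comp_apply, LinearMap.smul_apply, Lop_apply, br_one' hD' hv,
        br_one' hD hv, hD.map_one, hD'.map_one, br_zero, map_zero, smul_zero]
      abel
    · intro g u hu b
      simp only [LinearMap.sub_apply, LinearMap.add_apply, LinearMap.coe_comp,
        Function.comp_apply, LinearMap.smul_apply, Lop_apply]
      rw [br_gen_mul hgen hD' hv hu b, D_mul_gen hD hu b, br_gen_mul hgen hD hv hu b,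
        D_mul_gen hD' hu b]
      simp only [map_add, map_smul, br_add, br_smul]
      rw [D_mul_gen hD hu (S.br D' p' i v b), br_gen_mul hgen hD' hv hu (D b),
        D_mul_gen hD' hu (S.br D p i v b), br_gen_mul hgen hD hv hu (D' b)]
      simp only [Lcomm hgen hτ hτ' hD hD' hv hu, Lcomm hgen hτ' hτ hD' hD hv hu]
      by_cases hc1 : i + g + p' = 0 <;> by_cases hc2 : i + g + p = 0
      · have hg : g = -i - p' := by omega
        subst hg
        have hp : p' = p := by omega
        rw [hp]
        by_cases hi : Even i <;> by_cases hpp : Even p <;>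
          simp [gsgn, Int.even_mul, Int.even_add, Int.even_sub, even_neg, hi, hpp,
            smul_sub, smul_add, smul_smul, map_sub, map_add, map_smul] <;> module
      · have hz : τ v u = 0 := hτ.deg (S.gen_le i hv) (S.gen_le g hu) (by omega)
        have hg : g = -i - p' := by omega
        subst hg
        by_cases hi : Even i <;> by_cases hpp : Even p <;> by_cases hpp' : Even p' <;>
          simp [hz, gsgn, Int.even_mul, Int.even_add, Int.even_sub, even_neg, hi, hpp,
            hpp', smul_sub, smul_add, smul_smul, map_sub, map_add, map_smul] <;> module
      · have hz : τ' v u = 0 := hτ'.deg (S.gen_le i hv) (S.gen_le g hu) (by omega)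
        have hg : g = -i - p := by omega
        subst hg
        by_cases hi : Even i <;> by_cases hpp : Even p <;> by_cases hpp' : Even p' <;>
          simp [hz, gsgn, Int.even_mul, Int.even_add, Int.even_sub, even_neg, hi, hpp,
            hpp', smul_sub, smul_add, smul_smul, map_sub, map_add, map_smul] <;> module
      · have hz : τ v u = 0 := hτ.deg (S.gen_le i hv) (S.gen_le g hu) (by omega)
        have hz' : τ' v u = 0 := hτ'.deg (S.gen_le i hv) (S.gen_le g hu) (by omega)
        by_cases hi : Even i <;> by_cases hpp : Even p <;> by_cases hpp' : Even p' <;>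
          by_cases hgg : Even g <;>
          simp [hz, hz', gsgn, Int.even_mul, Int.even_add, Int.even_sub, even_neg, hi,
            hpp, hpp', hgg, smul_sub, smul_add, smul_smul, map_sub, map_add, map_smul] <;>
          module
  have h := key b
  simp only [LinearMap.sub_apply, LinearMap.add_apply, LinearMap.coe_comp,
    Function.comp_apply, LinearMap.smul_apply, Lop_apply] at h
  have h2 : D (S.br D' p' i v b)
      - (gsgn K (p * (i + p')) • S.br D' p' i v (D b)
        + gsgn K (p * p') • D' (S.br D p i v b)
        - gsgn K (p * p' + p' * (i + p)) • S.br D p i v (D' b)) = 0 := by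
    rw [← h]; abel
  exact sub_eq_zero.mp h2

end Main
end GSA

/-- Laplacians of symmetric pairings of degrees `p` and `p'` graded-commute:
`Δ_τ ∘ Δ_{τ'} = (−1)^{p p'} Δ_{τ'} ∘ Δ_τ`. -/
theorem laplacians_graded_commute
    {K : Type*} [Field K] [CharZero K] {A : Type*} [AddCommGroup A] [Module K A]
    (S : GSA K A) (hgen : S.Generates)
    (p p' : ℤ) (τ τ' : A →ₗ[K] A →ₗ[K] K)
    (hτ : S.IsSymPairing p τ) (hτ' : S.IsSymPairing p' τ')
    (D D' : A →ₗ[K] A)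
    (hD : S.IsLaplacian p τ D) (hD' : S.IsLaplacian p' τ' D') :
    D ∘ₗ D' = gsgn K (p * p') • (D' ∘ₗ D) := by
  open GSA in
  refine LinearMap.ext fun a => sub_eq_zero.mp ?_
  have key : ∀ x, (D ∘ₗ D' - gsgn K (p * p') • (D' ∘ₗ D)) x = 0 := by
    refine S.vanish hgen _ (fun i => gsgn K ((p + p') * i)) ?_ ?_
    · simp only [LinearMap.sub_apply, LinearMap.coe_comp, Function.comp_apply,
        LinearMap.smul_apply, hD.map_one, hD'.map_one, map_zero, smul_zero, sub_zero]
    · intro i v hv b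
      simp only [LinearMap.sub_apply, LinearMap.coe_comp, Function.comp_apply,
        LinearMap.smul_apply]
      rw [D_mul_gen hD' hv b, map_add, map_smul, D_mul_gen hD hv (D' b),
          D_mul_gen hD hv b, map_add, map_smul, D_mul_gen hD' hv (D b),
          Ccomm hgen hτ hτ' hD hD' hv b]
      by_cases hi : Even i <;> by_cases hp : Even p <;> by_cases hp' : Even p' <;>
        simp [gsgn, Int.even_mul, Int.even_add, hi, hp, hp', smul_sub, smul_add,
          smul_smul, map_sub, map_add, map_smul] <;> module
  exact key a
end

section
/- Under the internal hom differential, the Laplacian construction is natural in the pairing: ∂Δ_τ = Δ_{∂τ}, where ∂τ is the differential of the pairing τ in the internal hom complex [V⊗V, K]. -/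
/-- the symmetric algebra differential: degree `1`, square-zero, signed
derivation, preserving generators -/
structure IsDiff {K : Type*} [Field K] {A : Type*} [AddCommGroup A] [Module K A]
    (S : GSA K A) (Q : A →ₗ[K] A) : Prop where
  deg : ∀ {i : ℤ} {a : A}, a ∈ S.grade i → Q a ∈ S.grade (i + 1)
  sq : Q ∘ₗ Q = 0
  map_one : Q S.one = 0
  map_gen : ∀ {i : ℤ} {v : A}, v ∈ S.gen i → Q v ∈ S.gen (i + 1)
  leibniz : ∀ {i : ℤ} {a : A} (b : A), a ∈ S.grade i →
    Q (S.mul a b) = S.mul (Q a) b + gsgn K i • S.mul a (Q b)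

/-
`∂Δ_τ` has degree `p + 1`, kills `1` and the generators, sends a product of two generators
`v w` to `(∂τ)(v, w)`, and its bracket is again a bi-derivation, because `Q` is a derivation.
So `∂Δ_τ` is a Laplacian of `∂τ`. A Laplacian is determined by its pairing: by the Leibniz
rule it is fixed on monomials once its bracket is, and the bracket, a bi-derivation that is
graded symmetric, is fixed by its values on pairs of generators.
-/

def homDiff {K : Type*} [Field K] {A : Type*} [AddCommGroup A] [Module K A]
    (Q F : A →ₗ[K] A) (q : ℤ) : A →ₗ[K] A :=
  Q ∘ₗ F - gsgn K q • (F ∘ₗ Q)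

namespace GSA

variable {K : Type*} [Field K] {A : Type*} [AddCommGroup A] [Module K A] {S : GSA K A}

lemma IsMon.exists_mem_grade {m : A} (h : S.IsMon m) : ∃ i, m ∈ S.grade i := by
  induction h with
  | one => exact ⟨0, S.one_mem⟩
  | gen hv => exact ⟨_, S.gen_le _ hv⟩
  | mul _ _ iha ihb =>
    obtain ⟨i, hi⟩ := iha
    obtain ⟨j, hj⟩ := ihb
    exact ⟨i + j, S.mul_mem hi hj⟩

lemma mem_grade_of_eq {m : A} {n n' : ℤ} (h : m ∈ S.grade n) (e : n = n') :
    m ∈ S.grade n' := e ▸ h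

section Bracket

variable {F : A →ₗ[K] A} {q : ℤ}

lemma map_mul_eq_add_br (F : A →ₗ[K] A) (q i : ℤ) (a b : A) :
    F (S.mul a b) = S.mul (F a) b + gsgn K (q * i) • S.mul a (F b) + S.br F q i a b := by
  simp only [br]
  abel

lemma br_add_smul (F : A →ₗ[K] A) (q i : ℤ) (a : A) (c : K) (x y : A) :
    S.br F q i a (x + c • y) = S.br F q i a x + c • S.br F q i a y := by
  simp only [br, map_add, map_smul]
  module

lemma br_one (F : A →ₗ[K] A) (q i : ℤ) (a : A) (h : F S.one = 0) :
    S.br F q i a S.one = 0 := by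
  simp [br, S.mul_one, h]

lemma br_mem_grade (hF : ∀ {i : ℤ} {a : A}, a ∈ S.grade i → F a ∈ S.grade (i + q))
    {i j : ℤ} {a b : A} (ha : a ∈ S.grade i) (hb : b ∈ S.grade j) :
    S.br F q i a b ∈ S.grade (i + j + q) := by
  refine Submodule.sub_mem _ (Submodule.sub_mem _ ?_ ?_) (Submodule.smul_mem _ _ ?_)
  · exact hF (S.mul_mem ha hb)
  · exact mem_grade_of_eq (S.mul_mem (hF ha) hb) (by ring)
  · exact mem_grade_of_eq (S.mul_mem ha (hF hb)) (by ring)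

lemma br_comm (hF : ∀ {i : ℤ} {a : A}, a ∈ S.grade i → F a ∈ S.grade (i + q))
    {i j : ℤ} {a b : A} (ha : a ∈ S.grade i) (hb : b ∈ S.grade j) :
    S.br F q i a b = gsgn K (i * j) • S.br F q j b a := by
  simp only [br]
  rw [S.mul_comm ha hb, map_smul, S.mul_comm (hF ha) hb, S.mul_comm ha (hF hb)]
  by_cases hi : Even i <;> by_cases hj : Even j <;> by_cases hq : Even q <;>
    simp [gsgn, parity_simps, hi, hj, hq] <;> module

end Bracket

namespace IsLaplacian

variable {q : ℤ} {σ : A →ₗ[K] A →ₗ[K] K} {F G : A →ₗ[K] A}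

lemma br_eq_of_isMon_right (hF : S.IsLaplacian q σ F) (hG : S.IsLaplacian q σ G)
    {i : ℤ} {a : A} (ha : a ∈ S.grade i)
    (hgen : ∀ {j : ℤ} {v : A}, v ∈ S.gen j → S.br F q i a v = S.br G q i a v)
    {b : A} (hb : S.IsMon b) : S.br F q i a b = S.br G q i a b := by
  induction hb with
  | one => rw [br_one F q i a hF.map_one, br_one G q i a hG.map_one]
  | gen hv => exact hgen hv
  | mul hb hc ihb ihc =>
    obtain ⟨j, hj⟩ := hb.exists_mem_grade
    obtain ⟨k, hk⟩ := hc.exists_mem_grade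
    rw [hF.br_der ha hj hk, hG.br_der ha hj hk, ihb, ihc]

lemma br_eq_of_mem_gen (hF : S.IsLaplacian q σ F) (hG : S.IsLaplacian q σ G)
    {i : ℤ} {w : A} (hw : w ∈ S.gen i) {b : A} (hb : S.IsMon b) :
    S.br F q i w b = S.br G q i w b := by
  refine br_eq_of_isMon_right hF hG (S.gen_le i hw) (fun hv => ?_) hb
  simp only [br]
  rw [hF.map_pair hw hv, hG.map_pair hw hv, hF.map_gen hw, hG.map_gen hw, hF.map_gen hv,
    hG.map_gen hv]

lemma br_eq_of_isMon (hF : S.IsLaplacian q σ F) (hG : S.IsLaplacian q σ G)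
    {i : ℤ} {a b : A} (ha : a ∈ S.grade i) (hma : S.IsMon a) (hb : S.IsMon b) :
    S.br F q i a b = S.br G q i a b := by
  refine br_eq_of_isMon_right hF hG ha (fun {j v} hv => ?_) hb
  rw [br_comm hF.deg ha (S.gen_le j hv), br_comm hG.deg ha (S.gen_le j hv),
    br_eq_of_mem_gen hF hG hv hma]

lemma eq_of_isMon (hF : S.IsLaplacian q σ F) (hG : S.IsLaplacian q σ G)
    {m : A} (hm : S.IsMon m) : F m = G m := by
  induction hm with
  | one => rw [hF.map_one, hG.map_one]
  | gen hv => rw [hF.map_gen hv, hG.map_gen hv]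
  | mul ha hb iha ihb =>
    obtain ⟨i, hi⟩ := ha.exists_mem_grade
    rw [map_mul_eq_add_br F q i, map_mul_eq_add_br G q i, iha, ihb, br_eq_of_isMon hF hG hi ha hb]

theorem unique (hgen : S.Generates) (hF : S.IsLaplacian q σ F) (hG : S.IsLaplacian q σ G) :
    F = G := by
  ext a
  induction hgen a using Submodule.span_induction with
  | mem x hx => exact eq_of_isMon hF hG hx
  | zero => simp
  | add x y _ _ hx hy => simp [hx, hy]
  | smul c x _ hx => simp [hx]

end IsLaplacian

section HomDiff

variable {Q F : A →ₗ[K] A} {q : ℤ}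

@[simp]
lemma homDiff_apply (a : A) : homDiff Q F q a = Q (F a) - gsgn K q • F (Q a) := rfl

lemma homDiff_mem_grade (hQ : IsDiff S Q)
    (hF : ∀ {i : ℤ} {a : A}, a ∈ S.grade i → F a ∈ S.grade (i + q))
    {i : ℤ} {a : A} (ha : a ∈ S.grade i) :
    homDiff Q F q a ∈ S.grade (i + (q + 1)) := by
  refine Submodule.sub_mem _ ?_ (Submodule.smul_mem _ _ ?_)
  · exact mem_grade_of_eq (hQ.deg (hF ha)) (by ring)
  · exact mem_grade_of_eq (hF (hQ.deg ha)) (by ring)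

lemma br_homDiff (hQ : IsDiff S Q)
    (hF : ∀ {i : ℤ} {a : A}, a ∈ S.grade i → F a ∈ S.grade (i + q))
    {i : ℤ} {a : A} (b : A) (ha : a ∈ S.grade i) :
    S.br (homDiff Q F q) (q + 1) i a b =
      Q (S.br F q i a b) - gsgn K q • S.br F q (i + 1) (Q a) b
        - gsgn K (q + i) • S.br F q i a (Q b) := by
  simp only [br, homDiff_apply]
  rw [hQ.leibniz b ha]
  simp only [map_add, map_sub, map_smul, smul_add, smul_sub, smul_smul]
  rw [hQ.leibniz b (hF ha), hQ.leibniz (F b) ha]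
  by_cases hq : Even q <;> by_cases hi : Even i <;>
    simp [gsgn, parity_simps, hq, hi, ← Int.not_even_iff_odd] <;> module

lemma br_homDiff_mul (hQ : IsDiff S Q) {τ : A →ₗ[K] A →ₗ[K] K} (hF : S.IsLaplacian q τ F)
    {i j k : ℤ} {a b c : A} (ha : a ∈ S.grade i) (hb : b ∈ S.grade j) (hc : c ∈ S.grade k) :
    S.br (homDiff Q F q) (q + 1) i a (S.mul b c) =
      S.mul (S.br (homDiff Q F q) (q + 1) i a b) c
        + gsgn K ((i + (q + 1)) * j) • S.mul b (S.br (homDiff Q F q) (q + 1) i a c) := by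
  rw [br_homDiff hQ hF.deg _ ha, br_homDiff hQ hF.deg _ ha, br_homDiff hQ hF.deg _ ha,
    hF.br_der ha hb hc, hF.br_der (hQ.deg ha) hb hc, hQ.leibniz c hb,
    br_add_smul F q i a (gsgn K j), hF.br_der ha (hQ.deg hb) hc, hF.br_der ha hb (hQ.deg hc),
    map_add, map_smul Q, hQ.leibniz c (br_mem_grade hF.deg ha hb),
    hQ.leibniz (S.br F q i a c) hb]
  simp only [map_sub, map_smul, smul_add, smul_sub, smul_smul]
  by_cases hq : Even q <;> by_cases hi : Even i <;> by_cases hj : Even j <;>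
    simp [gsgn, parity_simps, hq, hi, hj, ← Int.not_even_iff_odd] <;> module

theorem IsLaplacian.homDiff (hQ : IsDiff S Q) {τ dτ : A →ₗ[K] A →ₗ[K] K}
    (hF : S.IsLaplacian q τ F)
    (hdτ : ∀ {i : ℤ} (a b : A), a ∈ S.grade i →
      dτ a b = -(gsgn K q) * (τ (Q a) b + gsgn K i * τ a (Q b))) :
    S.IsLaplacian (q + 1) dτ (homDiff Q F q) where
  deg := homDiff_mem_grade hQ hF.deg
  map_one := by simp [hF.map_one, hQ.map_one]
  map_gen hv := by simp [hF.map_gen hv, hF.map_gen (hQ.map_gen hv)]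
  map_pair {i} {_} {v w} hv hw := by
    have hvi := S.gen_le i hv
    rw [homDiff_apply, hF.map_pair hv hw, map_smul, hQ.map_one, hQ.leibniz w hvi, map_add,
      map_smul, hF.map_pair (hQ.map_gen hv) hw, hF.map_pair hv (hQ.map_gen hw), hdτ v w hvi,
      smul_zero]
    module
  br_der := br_homDiff_mul hQ hF

end HomDiff

end GSA

theorem partial_laplacian_eq_laplacian_partial_general
    {K : Type*} [Field K] {A : Type*} [AddCommGroup A] [Module K A]
    (S : GSA K A) (hgen : S.Generates)
    (Q : A →ₗ[K] A) (hQ : IsDiff S Q)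
    (p : ℤ) (τ dτ : A →ₗ[K] A →ₗ[K] K)
    -- `dτ` is the internal hom differential `∂τ` of the pairing `τ`
    (hdτ : ∀ {i : ℤ} (a b : A), a ∈ S.grade i →
      dτ a b = -(gsgn K p) * (τ (Q a) b + gsgn K i * τ a (Q b)))
    (D D' : A →ₗ[K] A)
    (hD : S.IsLaplacian p τ D) (hD' : S.IsLaplacian (p + 1) dτ D') :
    Q ∘ₗ D - gsgn K p • (D ∘ₗ Q) = D' :=
  (hD.homDiff hQ hdτ).unique hgen hD'

/-- `∂Δ_τ = Δ_{∂τ}`. -/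
theorem partial_laplacian_eq_laplacian_partial
    {K : Type*} [Field K] [CharZero K] {A : Type*} [AddCommGroup A] [Module K A]
    (S : GSA K A) (hgen : S.Generates)
    (Q : A →ₗ[K] A) (hQ : IsDiff S Q)
    (p : ℤ) (τ dτ : A →ₗ[K] A →ₗ[K] K)
    (hτ : S.IsSymPairing p τ)
    -- `dτ` is the internal hom differential `∂τ` of the pairing `τ`
    (hdτ : ∀ {i : ℤ} (a b : A), a ∈ S.grade i →
      dτ a b = -(gsgn K p) * (τ (Q a) b + gsgn K i * τ a (Q b)))
    (D D' : A →ₗ[K] A)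
    (hD : S.IsLaplacian p τ D) (hD' : S.IsLaplacian (p + 1) dτ D') :
    Q ∘ₗ D - gsgn K p • (D ∘ₗ Q) = D' :=
  partial_laplacian_eq_laplacian_partial_general S hgen Q hQ p τ dτ hdτ D D' hD hD'
end

section
/- For a free BV theory (F, Q, (−,−), W), the retarded/advanced Green's homotopy Λ± := W G± satisfies ∂Λ± = j, i.e. it is a cochain homotopy trivializing the inclusion j : 𝔉_c(M) → 𝔉(M) of compactly supported sections into all sections. -/
/-!
STATEMENT 7: For a free BV theory `(F, Q, (−,−), W)`, the retarded/advanced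
Green's homotopy `Λ± := W G±` satisfies `∂Λ± = j`, i.e. it is a cochain homotopy
trivializing the inclusion `j : 𝔉_c(M) → 𝔉(M)` of compactly supported sections
into all sections.

Abstraction (with the ℤ-grading collapsed): `Fc` and `F` are the (total) modules
of compactly supported resp. all sections, with differentials `q` and `QF`;
`W` is the Green's witness (degree −1), `G±` the retarded/advanced Green's
operators of `P = QF ∘ W + W ∘ QF`, satisfying `P G± = j` and `G± q = QF G±`.
The internal hom differential of the degree `−1` map `Λ± = W ∘ G±` is
`∂Λ± = QF ∘ Λ± + Λ± ∘ q`.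
-/

theorem green_homotopy_trivializes_inclusion
    (Fc F : Type*) [AddCommGroup Fc] [Module ℝ Fc] [AddCommGroup F] [Module ℝ F]
    -- differentials on compactly supported and on all sections
    (q : Fc →ₗ[ℝ] Fc) (QF : F →ₗ[ℝ] F)
    (hq : q ∘ₗ q = 0) (hQF : QF ∘ₗ QF = 0)
    -- the inclusion of compactly supported sections (a cochain map)
    (j : Fc →ₗ[ℝ] F) (hj : QF ∘ₗ j = j ∘ₗ q)
    -- the Green's witness
    (W : F →ₗ[ℝ] F)
    -- the retarded and advanced Green's operators of P = QW + WQ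
    (Gp Gm : Fc →ₗ[ℝ] F)
    (hGpQ : Gp ∘ₗ q = QF ∘ₗ Gp) (hGmQ : Gm ∘ₗ q = QF ∘ₗ Gm)
    (hPGp : (QF ∘ₗ W + W ∘ₗ QF) ∘ₗ Gp = j)
    (hPGm : (QF ∘ₗ W + W ∘ₗ QF) ∘ₗ Gm = j) :
    -- ∂Λ± = j for Λ± = W ∘ G±
    QF ∘ₗ (W ∘ₗ Gp) + (W ∘ₗ Gp) ∘ₗ q = j ∧
    QF ∘ₗ (W ∘ₗ Gm) + (W ∘ₗ Gm) ∘ₗ q = j := by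
  constructor
  · calc QF ∘ₗ (W ∘ₗ Gp) + (W ∘ₗ Gp) ∘ₗ q
        = QF ∘ₗ (W ∘ₗ Gp) + W ∘ₗ (Gp ∘ₗ q) := by rw [LinearMap.comp_assoc]
      _ = (QF ∘ₗ W + W ∘ₗ QF) ∘ₗ Gp := by
          rw [hGpQ, LinearMap.add_comp, LinearMap.comp_assoc, LinearMap.comp_assoc]
      _ = j := hPGp
  · calc QF ∘ₗ (W ∘ₗ Gm) + (W ∘ₗ Gm) ∘ₗ q
        = QF ∘ₗ (W ∘ₗ Gm) + W ∘ₗ (Gm ∘ₗ q) := by rw [LinearMap.comp_assoc]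
      _ = (QF ∘ₗ W + W ∘ₗ QF) ∘ₗ Gm := by
          rw [hGmQ, LinearMap.add_comp, LinearMap.comp_assoc, LinearMap.comp_assoc]
      _ = j := hPGm
end

section
/- Einstein causality for the classical theory: for causally disjoint morphisms f₁ : M₁ → N ← M₂ : f₂ in Loc_m, the unshifted Poisson structure vanishes on pushed-forward observables: τ₍₀₎ ∘ (f₁* ⊗ f₂*) = 0. -/
/-!
STATEMENT 11: Einstein causality for the classical theory: for causally disjoint
morphisms `f₁ : M₁ → N ← M₂ : f₂` in `Loc_m`, the unshifted Poisson structure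
vanishes on pushed-forward observables: `τ₍₀₎ ∘ (f₁* ⊗ f₂*) = 0`.

Abstraction: the spacetime `N` carries a causal precedence relation `R`
(`R x y` means that there is a future directed causal curve from `x` to `y`), so
that `J⁺(S) = {y | ∃ x ∈ S, R x y}` and `J⁻(S) = {y | ∃ x ∈ S, R y x}`.
`Fc`/`F` are the modules of compactly supported/all sections on `N` (grading
collapsed, which is harmless for a vanishing statement), `ι` the inclusion,
`Λ± = W G±` the retarded/advanced Green's homotopies with
`supp(Λ± ψ) ⊆ J^±(supp ψ)`, and `Kp x y = ∫_N (x, y) vol_N` the integration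
pairing, which vanishes on sections with disjoint supports.  `g₁, g₂` model the
pushforwards `f₁*, f₂*` along morphisms with images `M₁, M₂ ⊆ N`; causal
disjointness reads `J_N(M₁) ∩ M₂ = ∅`.  The conclusion is
`τ₍₀₎(f₁* ψ₁ ⊗ f₂* ψ₂) = ∫ (f₁* ψ₁, (Λ₊ − Λ₋) f₂* ψ₂) vol = 0`.
-/

theorem classical_einstein_causality
    (N : Type*) (R : N → N → Prop)
    (M₁ M₂ : Set N)
    (Fc F V₁ V₂ : Type*)
    [AddCommGroup Fc] [Module ℝ Fc] [AddCommGroup F] [Module ℝ F]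
    [AddCommGroup V₁] [Module ℝ V₁] [AddCommGroup V₂] [Module ℝ V₂]
    (ι : Fc →ₗ[ℝ] F) (Λp Λm : Fc →ₗ[ℝ] F)
    (Kp : F →ₗ[ℝ] F →ₗ[ℝ] ℝ)
    (supp : F → Set N)
    (g₁ : V₁ →ₗ[ℝ] Fc) (g₂ : V₂ →ₗ[ℝ] Fc)
    -- the integration pairing vanishes on sections with disjoint supports
    (hdis : ∀ x y : F, supp x ∩ supp y = ∅ → Kp x y = 0)
    -- support properties of the retarded/advanced Green's homotopies
    (hΛp : ∀ ψ : Fc, supp (Λp ψ) ⊆ {n | ∃ m ∈ supp (ι ψ), R m n})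
    (hΛm : ∀ ψ : Fc, supp (Λm ψ) ⊆ {n | ∃ m ∈ supp (ι ψ), R n m})
    -- pushed-forward sections are supported in the images M₁, M₂
    (hsupp₁ : ∀ v : V₁, supp (ι (g₁ v)) ⊆ M₁)
    (hsupp₂ : ∀ v : V₂, supp (ι (g₂ v)) ⊆ M₂)
    -- causal disjointness: J_N(f₁(M₁)) ∩ f₂(M₂) = ∅
    (hcd : ({n | ∃ m ∈ M₁, R m n} ∪ {n | ∃ m ∈ M₁, R n m}) ∩ M₂ = ∅) :
    -- τ₍₀₎ ∘ (f₁* ⊗ f₂*) = 0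
    ∀ (v₁ : V₁) (v₂ : V₂),
      Kp (ι (g₁ v₁)) (Λp (g₂ v₂)) - Kp (ι (g₁ v₁)) (Λm (g₂ v₂)) = 0 := by
  intro v₁ v₂
  have h1 : Kp (ι (g₁ v₁)) (Λp (g₂ v₂)) = 0 := by
    apply hdis
    rw [Set.eq_empty_iff_forall_notMem]
    rintro n ⟨hn1, hn2⟩
    obtain ⟨m, hm, hRmn⟩ := hΛp (g₂ v₂) hn2
    have : m ∈ ({n | ∃ m ∈ M₁, R m n} ∪ {n | ∃ m ∈ M₁, R n m}) ∩ M₂ :=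
      ⟨Or.inr ⟨n, hsupp₁ v₁ hn1, hRmn⟩, hsupp₂ v₂ hm⟩
    rw [hcd] at this; exact this
  have h2 : Kp (ι (g₁ v₁)) (Λm (g₂ v₂)) = 0 := by
    apply hdis
    rw [Set.eq_empty_iff_forall_notMem]
    rintro n ⟨hn1, hn2⟩
    obtain ⟨m, hm, hRnm⟩ := hΛm (g₂ v₂) hn2
    have : m ∈ ({n | ∃ m ∈ M₁, R m n} ∪ {n | ∃ m ∈ M₁, R n m}) ∩ M₂ :=
      ⟨Or.inl ⟨n, hsupp₁ v₁ hn1, hRnm⟩, hsupp₂ v₂ hm⟩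
    rw [hcd] at this; exact this
  rw [h1, h2, sub_zero]
end

section
/- For every time-ordered pair (f₁, f₂) : (M₁, M₂) → N in Loc_m, the Dirac pairing and the unshifted Poisson structure agree up to a factor ½ on pushed-forward observables: τ_D ∘ (f₁* ⊗ f₂*) = ½ τ₍₀₎ ∘ (f₁* ⊗ f₂*). -/
/-!
STATEMENT 13: For every time-ordered pair `(f₁, f₂) : (M₁, M₂) → N` in `Loc_m`,
the Dirac pairing and the unshifted Poisson structure agree up to a factor `½`
on pushed-forward observables: `τ_D ∘ (f₁* ⊗ f₂*) = ½ τ₍₀₎ ∘ (f₁* ⊗ f₂*)`.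

Abstraction (as in the classical Einstein causality statement): `N` carries a
causal precedence relation `R`, with `J⁺(S) = {y | ∃ x ∈ S, R x y}` and
`J⁻(S) = {y | ∃ x ∈ S, R y x}`; `Λ±` are the retarded/advanced Green's
homotopies with `supp(Λ± ψ) ⊆ J^±(supp ψ)`; `Kp` is the integration pairing,
vanishing on sections with disjoint supports; `g₁, g₂` model the pushforwards
`f₁*, f₂*` with images `M₁, M₂ ⊆ N`.  Time-orderedness of `(f₁, f₂)` reads
`J⁺_N(f₁(M₁)) ∩ f₂(M₂) = ∅`.  With `Λ_D = ½(Λ₊ + Λ₋)` and `Λ = Λ₊ − Λ₋`, the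
conclusion is `∫(f₁*ψ₁, Λ_D f₂*ψ₂) vol = ½ ∫(f₁*ψ₁, Λ f₂*ψ₂) vol`.
-/

theorem dirac_pairing_equals_half_poisson_on_time_ordered
    (N : Type*) (R : N → N → Prop)
    (M₁ M₂ : Set N)
    (Fc F V₁ V₂ : Type*)
    [AddCommGroup Fc] [Module ℝ Fc] [AddCommGroup F] [Module ℝ F]
    [AddCommGroup V₁] [Module ℝ V₁] [AddCommGroup V₂] [Module ℝ V₂]
    (ι : Fc →ₗ[ℝ] F) (Λp Λm : Fc →ₗ[ℝ] F)
    (Kp : F →ₗ[ℝ] F →ₗ[ℝ] ℝ)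
    (supp : F → Set N)
    (g₁ : V₁ →ₗ[ℝ] Fc) (g₂ : V₂ →ₗ[ℝ] Fc)
    -- the integration pairing vanishes on sections with disjoint supports
    (hdis : ∀ x y : F, supp x ∩ supp y = ∅ → Kp x y = 0)
    -- support properties of the retarded/advanced Green's homotopies
    (hΛp : ∀ ψ : Fc, supp (Λp ψ) ⊆ {n | ∃ m ∈ supp (ι ψ), R m n})
    (hΛm : ∀ ψ : Fc, supp (Λm ψ) ⊆ {n | ∃ m ∈ supp (ι ψ), R n m})
    -- pushed-forward sections are supported in the images M₁, M₂
    (hsupp₁ : ∀ v : V₁, supp (ι (g₁ v)) ⊆ M₁)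
    (hsupp₂ : ∀ v : V₂, supp (ι (g₂ v)) ⊆ M₂)
    -- (f₁, f₂) is a time-ordered pair: J⁺_N(f₁(M₁)) ∩ f₂(M₂) = ∅
    (hto : {n | ∃ m ∈ M₁, R m n} ∩ M₂ = ∅) :
    -- τ_D ∘ (f₁* ⊗ f₂*) = ½ τ₍₀₎ ∘ (f₁* ⊗ f₂*)
    ∀ (v₁ : V₁) (v₂ : V₂),
      (2:ℝ)⁻¹ * (Kp (ι (g₁ v₁)) (Λp (g₂ v₂)) + Kp (ι (g₁ v₁)) (Λm (g₂ v₂)))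
        = (2:ℝ)⁻¹ * (Kp (ι (g₁ v₁)) (Λp (g₂ v₂)) - Kp (ι (g₁ v₁)) (Λm (g₂ v₂))) := by
  intro v₁ v₂
  have hzero : Kp (ι (g₁ v₁)) (Λm (g₂ v₂)) = 0 := by
    apply hdis
    ext n
    simp only [Set.mem_inter_iff, Set.mem_empty_iff_false, iff_false, not_and]
    intro hn hΛ
    obtain ⟨m, hm, hRnm⟩ := hΛm (g₂ v₂) hΛ
    have : m ∈ ({n | ∃ m ∈ M₁, R m n} : Set N) ∩ M₂ :=
      ⟨⟨n, hsupp₁ v₁ hn, hRnm⟩, hsupp₂ v₂ hm⟩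
    rw [hto] at this
    exact this
  rw [hzero]; ring
end
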